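/- arXiv:2002.07494 — 2 statements merged into one kernel-verified Lean document; each statement's English description precedes it below -/
import Mathlib

section
/- Let Λ be a free abelian group of finite rank. The image of the map b : Sym²(Λ*) → Bil^s(Λ) (sending χ·μ to the symmetric bilinear form (x,y) ↦ χ(x)μ(y)+μ(x)χ(y)) is exactly the subgroup of even symmetric bilinear forms, i.e. those B with B(x,x) even for all x ∈ Λ; moreover b is injective. -/
open TensorProduct

/-- The relations `χ ⊗ μ - μ ⊗ χ` defining the symmetric square. -/
abbrev symRel (M : Type*) [AddCommGroup M] [Module ℤ M] : Submodule ℤ (M ⊗[ℤ] M) :=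
  Submodule.span ℤ {x | ∃ a b : M, x = a ⊗ₜ[ℤ] b - b ⊗ₜ[ℤ] a}

/-- The symmetric square `Sym²(M)` of a `ℤ`-module. -/
abbrev Sym2Mod (M : Type*) [AddCommGroup M] [Module ℤ M] : Type _ :=
  (M ⊗[ℤ] M) ⧸ symRel M

open Module

noncomputable def toBil (Λ : Type*) [AddCommGroup Λ] [Module ℤ Λ] :
    ((Λ →ₗ[ℤ] ℤ) ⊗[ℤ] (Λ →ₗ[ℤ] ℤ)) →ₗ[ℤ] (Λ →ₗ[ℤ] Λ →ₗ[ℤ] ℤ) :=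
  TensorProduct.lift <| LinearMap.mk₂ ℤ
    (fun χ μ => LinearMap.mk₂ ℤ (fun x y => χ x * μ y + μ x * χ y)
      (by intros; simp; ring) (by intros; simp [smul_eq_mul]; ring)
      (by intros; simp; ring) (by intros; simp [smul_eq_mul]; ring))
    (by intros; ext x y; simp; ring) (by intros; ext x y; simp [smul_eq_mul]; ring)
    (by intros; ext x y; simp; ring) (by intros; ext x y; simp [smul_eq_mul]; ring)

@[simp] theorem toBil_tmul (Λ : Type*) [AddCommGroup Λ] [Module ℤ Λ]
    (χ μ : Λ →ₗ[ℤ] ℤ) (x y : Λ) :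
    toBil Λ (χ ⊗ₜ[ℤ] μ) x y = χ x * μ y + μ x * χ y := rfl

theorem toBil_sum (Λ : Type*) [AddCommGroup Λ] [Module ℤ Λ] [Module.Free ℤ Λ]
    [Module.Finite ℤ Λ] (c : Fin (finrank ℤ Λ) × Fin (finrank ℤ Λ) → ℤ)
    (k l : Fin (finrank ℤ Λ)) :
    toBil Λ (∑ p : Fin (finrank ℤ Λ) × Fin (finrank ℤ Λ),
        c p • ((finBasis ℤ Λ).dualBasis p.1 ⊗ₜ[ℤ] (finBasis ℤ Λ).dualBasis p.2))
      (finBasis ℤ Λ k) (finBasis ℤ Λ l) = c (k, l) + c (l, k) := by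
  simp [Fintype.sum_prod_type, Basis.dualBasis_apply_self, mul_ite, ite_mul,
    Finset.sum_ite_eq, Finsupp.single_apply, Finset.sum_add_distrib, smul_eq_mul, mul_add,
    Finset.sum_ite_eq']

/-- antisymmetric coefficient combinations lie in `symRel`. -/
theorem anti_mem_symRel (Λ : Type*) [AddCommGroup Λ] [Module ℤ Λ] [Module.Free ℤ Λ]
    [Module.Finite ℤ Λ] (e : Fin (finrank ℤ Λ) × Fin (finrank ℤ Λ) → ℤ)
    (he : ∀ k l, e (k, l) = - e (l, k)) :
    (∑ p : Fin (finrank ℤ Λ) × Fin (finrank ℤ Λ),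
        e p • ((finBasis ℤ Λ).dualBasis p.1 ⊗ₜ[ℤ] (finBasis ℤ Λ).dualBasis p.2))
      ∈ symRel (Λ →ₗ[ℤ] ℤ) := by
  set d := (finBasis ℤ Λ).dualBasis with hd
  have hdiag : ∀ k, e (k, k) = 0 := by intro k; have := he k k; omega
  have hsplit := Finset.sum_filter_add_sum_filter_not Finset.univ
    (fun p : Fin (finrank ℤ Λ) × Fin (finrank ℤ Λ) => p.1 < p.2)
    (fun p => e p • (d p.1 ⊗ₜ[ℤ] d p.2))
  rw [← hsplit]
  have h2 : ∑ p ∈ Finset.univ.filter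
      (fun p : Fin (finrank ℤ Λ) × Fin (finrank ℤ Λ) => ¬ p.1 < p.2),
        e p • (d p.1 ⊗ₜ[ℤ] d p.2)
      = ∑ p ∈ Finset.univ.filter
      (fun p : Fin (finrank ℤ Λ) × Fin (finrank ℤ Λ) => p.2 < p.1),
        e p • (d p.1 ⊗ₜ[ℤ] d p.2) := by
    refine (Finset.sum_subset ?_ ?_).symm
    · intro p hp
      simp only [Finset.mem_filter, Finset.mem_univ, true_and, not_lt] at hp ⊢
      exact le_of_lt hp
    · intro p hp hp2
      simp only [Finset.mem_filter, Finset.mem_univ, true_and, not_lt] at hp hp2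
      have : p.1 = p.2 := le_antisymm hp2 hp
      have hpp : p = (p.1, p.1) := by rw [Prod.ext_iff]; exact ⟨rfl, this.symm⟩
      have : e p = 0 := by rw [hpp]; exact hdiag p.1
      simp [this]
  rw [h2]
  have h3 : ∑ p ∈ Finset.univ.filter
      (fun p : Fin (finrank ℤ Λ) × Fin (finrank ℤ Λ) => p.2 < p.1),
        e p • (d p.1 ⊗ₜ[ℤ] d p.2)
      = ∑ p ∈ Finset.univ.filter
      (fun p : Fin (finrank ℤ Λ) × Fin (finrank ℤ Λ) => p.1 < p.2),
        (- e p) • (d p.2 ⊗ₜ[ℤ] d p.1) := by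
    refine Finset.sum_nbij' (fun p => (p.2, p.1)) (fun p => (p.2, p.1)) ?_ ?_ ?_ ?_ ?_
    · intro p hp; simpa using (Finset.mem_filter.mp hp).2
    · intro p hp; simpa using (Finset.mem_filter.mp hp).2
    · intros; rfl
    · intros; rfl
    · intro p hp
      have : e p = - e (p.2, p.1) := by rw [show p = (p.1, p.2) from rfl]; exact he _ _
      rw [this]; try simp
  rw [h3, ← Finset.sum_add_distrib]
  refine Submodule.sum_mem _ (fun p hp => ?_)
  have : e p • (d p.1 ⊗ₜ[ℤ] d p.2) + (- e p) • (d p.2 ⊗ₜ[ℤ] d p.1)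
      = e p • ((d p.1 ⊗ₜ[ℤ] d p.2) - (d p.2 ⊗ₜ[ℤ] d p.1)) := by
    rw [smul_sub, neg_smul, sub_eq_add_neg]
  rw [this]
  exact Submodule.smul_mem _ _ (Submodule.subset_span ⟨d p.1, d p.2, rfl⟩)

theorem toBil_ker (Λ : Type*) [AddCommGroup Λ] [Module ℤ Λ] [Module.Free ℤ Λ]
    [Module.Finite ℤ Λ] (t : (Λ →ₗ[ℤ] ℤ) ⊗[ℤ] (Λ →ₗ[ℤ] ℤ)) (h : toBil Λ t = 0) :
    t ∈ symRel (Λ →ₗ[ℤ] ℤ) := by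
  set bΛ := finBasis ℤ Λ with hbΛ
  set tb := bΛ.dualBasis.tensorProduct bΛ.dualBasis with htb
  have ht : t = ∑ p : Fin (finrank ℤ Λ) × Fin (finrank ℤ Λ),
      tb.repr t p • (bΛ.dualBasis p.1 ⊗ₜ[ℤ] bΛ.dualBasis p.2) := by
    conv_lhs => rw [← tb.sum_repr t]
    refine Finset.sum_congr rfl fun p _ => ?_
    rw [htb, Basis.tensorProduct_apply']
  rw [ht]
  refine anti_mem_symRel Λ _ fun k l => ?_
  have h2 := toBil_sum Λ (fun p => tb.repr t p) k l
  rw [← ht, h] at h2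
  simp only [LinearMap.zero_apply] at h2
  omega

theorem toBil_props (Λ : Type*) [AddCommGroup Λ] [Module ℤ Λ]
    (t : (Λ →ₗ[ℤ] ℤ) ⊗[ℤ] (Λ →ₗ[ℤ] ℤ)) :
    (∀ x y, toBil Λ t x y = toBil Λ t y x) ∧ ∀ x : Λ, (2:ℤ) ∣ toBil Λ t x x := by
  induction t using TensorProduct.induction_on with
  | zero => simp
  | tmul χ μ =>
      refine ⟨fun x y => by simp; ring, fun x => ⟨χ x * μ x, by simp; ring⟩⟩
  | add s t hs ht =>
      refine ⟨fun x y => ?_, fun x => ?_⟩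
      · simp [hs.1 x y, ht.1 x y]
      · simpa using dvd_add (hs.2 x) (ht.2 x)

theorem toBil_surj (Λ : Type*) [AddCommGroup Λ] [Module ℤ Λ] [Module.Free ℤ Λ]
    [Module.Finite ℤ Λ] (B : Λ →ₗ[ℤ] Λ →ₗ[ℤ] ℤ)
    (hsymm : ∀ x y, B x y = B y x) (heven : ∀ x : Λ, (2:ℤ) ∣ B x x) :
    ∃ t, toBil Λ t = B := by
  set bΛ := finBasis ℤ Λ with hbΛ
  set c : Fin (finrank ℤ Λ) × Fin (finrank ℤ Λ) → ℤ := fun p =>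
    if p.1 < p.2 then B (bΛ p.1) (bΛ p.2)
    else if p.1 = p.2 then B (bΛ p.1) (bΛ p.1) / 2 else 0 with hc
  refine ⟨∑ p : Fin (finrank ℤ Λ) × Fin (finrank ℤ Λ),
    c p • (bΛ.dualBasis p.1 ⊗ₜ[ℤ] bΛ.dualBasis p.2), ?_⟩
  refine bΛ.ext fun k => bΛ.ext fun l => ?_
  rw [toBil_sum]
  rcases lt_trichotomy k l with h | h | h
  · have h1 : ¬ l < k := not_lt.mpr h.le
    have h2 : l ≠ k := h.ne'
    simp [hc, h, h1, h2]
  · subst h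
    obtain ⟨m, hm⟩ := heven (bΛ k)
    simp only [hc, lt_irrefl, if_false, if_pos rfl, hm,
      Int.mul_ediv_cancel_left _ two_ne_zero, if_true]
    ring
  · have h1 : ¬ k < l := not_lt.mpr h.le
    have h2 : k ≠ l := h.ne'
    simp [hc, h, h1, h2, hsymm (bΛ k) (bΛ l)]

/-- the map `b : Sym²(Λ*) → Bilˢ(Λ)`, `χ·μ ↦ ((x,y) ↦ χ(x)μ(y)+μ(x)χ(y))`,
is injective and its image is exactly the set of even symmetric bilinear forms. -/
theorem statement_3 (Λ : Type*) [AddCommGroup Λ] [Module ℤ Λ] [Module.Free ℤ Λ]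
    [Module.Finite ℤ Λ] :
    ∃ b : Sym2Mod (Λ →ₗ[ℤ] ℤ) →+ (Λ →ₗ[ℤ] Λ →ₗ[ℤ] ℤ),
      (∀ (χ μ : Λ →ₗ[ℤ] ℤ) (x y : Λ),
        b (Submodule.Quotient.mk (χ ⊗ₜ[ℤ] μ)) x y = χ x * μ y + μ x * χ y) ∧
      Function.Injective b ∧
      Set.range b = {B : Λ →ₗ[ℤ] Λ →ₗ[ℤ] ℤ |
        (∀ x y, B x y = B y x) ∧ ∀ x : Λ, (2:ℤ) ∣ B x x} := by
  have hle : symRel (Λ →ₗ[ℤ] ℤ) ≤ LinearMap.ker (toBil Λ) := by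
    rw [Submodule.span_le]
    rintro _ ⟨a, b, rfl⟩
    simp only [SetLike.mem_coe, LinearMap.mem_ker, map_sub]
    ext x y
    simp
    ring
  set f := (symRel (Λ →ₗ[ℤ] ℤ)).liftQ (toBil Λ) hle with hf
  refine ⟨f.toAddMonoidHom, ?_, ?_, ?_⟩
  · intro χ μ x y
    show f (Submodule.Quotient.mk (χ ⊗ₜ[ℤ] μ)) x y = _
    rw [hf, Submodule.liftQ_apply, toBil_tmul]
  · intro x y h
    obtain ⟨s, rfl⟩ := Submodule.Quotient.mk_surjective _ x
    obtain ⟨t, rfl⟩ := Submodule.Quotient.mk_surjective _ y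
    have h' : toBil Λ s = toBil Λ t := by
      have : f (Submodule.Quotient.mk s) = f (Submodule.Quotient.mk t) := h
      rwa [hf, Submodule.liftQ_apply, Submodule.liftQ_apply] at this
    rw [Submodule.Quotient.eq]
    exact toBil_ker Λ (s - t) (by rw [map_sub, h', sub_self])
  · ext B
    constructor
    · rintro ⟨x, rfl⟩
      obtain ⟨t, rfl⟩ := Submodule.Quotient.mk_surjective _ x
      show (∀ x y, f _ x y = f _ y x) ∧ _
      rw [hf, Submodule.liftQ_apply]
      exact toBil_props Λ t
    · rintro ⟨hsymm, heven⟩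
      obtain ⟨t, ht⟩ := toBil_surj Λ B hsymm heven
      exact ⟨Submodule.Quotient.mk t, by
        show f (Submodule.Quotient.mk t) = B
        rw [hf, Submodule.liftQ_apply, ht]⟩
end

section
/- Let Λ be a free abelian group of rank r with basis e_1,…,e_r, let g ≥ 1 and d = (d_1,…,d_r) ∈ ℤ^r. Consider the free abelian group R on generators a_{ij} (1 ≤ i ≤ j ≤ r), c_k ∈ ℤ^n-valued symbols, and b_l (1 ≤ l ≤ r), mapping to Λ* ⊕ Bil^s(Λ) by: w(an element with coefficients a_{ij}, ζ^k ∈ ℤ^n, b_l) = ( Σ_{i≤j} a_{ij}(d_i e_j + d_j e_i) + Σ_k |ζ^k| e_k + Σ_l b_l(d_l + 1 − g)e_l , Σ_{i≤j} a_{ij}(e_i⊗e_j + e_j⊗e_i) + Σ_l b_l e_l⊗e_l ). Then an element lies in the kernel if and only if a_{ij} = 0 for i < j, b_i = −2a_{ii}, and ((2g−2)a_{ii} + |ζ^i|) = 0 for all i (interpreting the last condition as (a_{ii}, ζ^i) ∈ H_{g,n}). -/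
/-!
The `Bilˢ(Λ)` component is the symmetric matrix with entries `a_{ij}` off the diagonal and
`2a_{ii} + b_i` on it, so it vanishes exactly when `a` is diagonal and `b_i = -2a_{ii}`. For diagonal
`a` the `Λ*` component has `k`-th coordinate `2a_{kk}d_k + |ζ^k| + b_k(d_k + 1 - g)`, which becomes
`(2g - 2)a_{kk} + |ζ^k|` once `b_k = -2a_{kk}`: the degree `d` cancels.
-/

open Finset

section

variable {ι R M : Type*} [Fintype ι] [LinearOrder ι]

lemma sum_filter_le_eq_sum_diag [AddCommMonoid M] {f : ι × ι → M}
    (hf : ∀ i j, i < j → f (i, j) = 0) :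
    ∑ p ∈ univ.filter (fun p : ι × ι => p.1 ≤ p.2), f p = ∑ i, f (i, i) := by
  rw [sum_filter, Fintype.sum_prod_type]
  refine sum_congr rfl fun i _ => ?_
  rw [sum_eq_single i (fun j _ hji => ?_) (by simp)]
  · simp
  · rcases lt_or_gt_of_ne hji with h | h
    · simp [not_le.mpr h]
    · simp [h.le, hf i j h]

lemma sum_smul_pi_single_one [Semiring R] (c : ι → R) :
    ∑ i, c i • (Pi.single i 1 : ι → R) = c := by
  ext i
  simp [Pi.single_apply]

lemma sum_filter_le_smul_pi_single_eq [Semiring R] {a : ι → ι → R} (ha : ∀ i j, i < j → a i j = 0)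
    (d : ι → R) :
    ∑ p ∈ univ.filter (fun p : ι × ι => p.1 ≤ p.2),
        a p.1 p.2 • (d p.1 • (Pi.single p.2 1 : ι → R) + d p.2 • Pi.single p.1 1)
      = fun i => 2 * a i i * d i := by
  rw [sum_filter_le_eq_sum_diag (by simp +contextual [ha]),
    ← sum_smul_pi_single_one fun i => 2 * a i i * d i]
  simp only [← add_smul, smul_smul, mul_add, add_mul, two_mul]

lemma sum_filter_le_smul_single_add_single_apply [Semiring R] (a : ι → ι → R) (i j : ι) :
    (∑ p ∈ univ.filter (fun p : ι × ι => p.1 ≤ p.2),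
        a p.1 p.2 • (Matrix.single p.1 p.2 (1 : R) + Matrix.single p.2 p.1 1) : Matrix ι ι R) i j
      = (if i ≤ j then a i j else 0) + (if j ≤ i then a j i else 0) := by
  have hij (p : ι × ι) : (p.1 = i ∧ p.2 = j) ↔ p = (i, j) := Prod.ext_iff (y := (i, j)) |>.symm
  have hji (p : ι × ι) : (p.2 = i ∧ p.1 = j) ↔ p = (j, i) := by
    rw [and_comm]; exact (Prod.ext_iff (y := (j, i))).symm
  simp only [Matrix.sum_apply, Matrix.smul_apply, Matrix.add_apply, Matrix.single_apply, hij, hji,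
    smul_eq_mul, mul_add, mul_ite, mul_one, mul_zero, sum_add_distrib, sum_ite_eq', mem_filter,
    mem_univ, true_and]

lemma sum_filter_le_smul_single_add_single_add_diagonal_eq_zero_iff [CommRing R]
    (a : ι → ι → R) (b : ι → R) :
    (∑ p ∈ univ.filter (fun p : ι × ι => p.1 ≤ p.2),
        a p.1 p.2 • (Matrix.single p.1 p.2 (1 : R) + Matrix.single p.2 p.1 1))
      + ∑ l, b l • Matrix.single l l (1 : R) = 0
      ↔ (∀ i j, i < j → a i j = 0) ∧ ∀ i, b i = -2 * a i i := by
  simp only [Matrix.smul_single, smul_eq_mul, mul_one, Matrix.sum_single_eq_diagonal,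
    ← Matrix.ext_iff, Matrix.add_apply, sum_filter_le_smul_single_add_single_apply,
    Matrix.diagonal_apply, Matrix.zero_apply]
  constructor
  · intro h
    refine ⟨fun i j hij => ?_, fun i => ?_⟩
    · simpa [hij.le, not_le.mpr hij, hij.ne] using h i j
    · have hii := h i i
      simp only [le_refl, if_true] at hii
      linear_combination hii
  · rintro ⟨ha, hb⟩ i j
    rcases lt_trichotomy i j with h | rfl | h
    · simp [h.le, not_le.mpr h, h.ne, ha i j h]
    · simp only [le_refl, if_true, hb]
      ring
    · simp [h.le, not_le.mpr h, h.ne', ha j i h]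

end

theorem statement_18_general (r n : ℕ) (g : ℤ) (d : Fin r → ℤ)
    (a : Fin r → Fin r → ℤ) (ζ : Fin r → Fin n → ℤ) (b : Fin r → ℤ) :
    ((∑ p ∈ Finset.univ.filter (fun p : Fin r × Fin r => p.1 ≤ p.2),
          a p.1 p.2 • (d p.1 • (Pi.single p.2 1 : Fin r → ℤ)
            + d p.2 • (Pi.single p.1 1 : Fin r → ℤ)))
        + (∑ k, (∑ s, ζ k s) • (Pi.single k 1 : Fin r → ℤ))
        + (∑ l, (b l * (d l + 1 - g)) • (Pi.single l 1 : Fin r → ℤ)) = 0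
      ∧ (∑ p ∈ Finset.univ.filter (fun p : Fin r × Fin r => p.1 ≤ p.2),
            a p.1 p.2 • (Matrix.single p.1 p.2 (1:ℤ)
              + Matrix.single p.2 p.1 (1:ℤ)))
          + (∑ l, b l • Matrix.single l l (1:ℤ)) = 0)
    ↔ ((∀ i j : Fin r, i < j → a i j = 0) ∧ (∀ i, b i = -2 * a i i)
        ∧ ∀ i, (2 * g - 2) * a i i + (∑ s, ζ i s) = 0) := by
  rw [sum_filter_le_smul_single_add_single_add_diagonal_eq_zero_iff, sum_smul_pi_single_one,
    sum_smul_pi_single_one]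
  constructor
  · rintro ⟨hw, ha, hb⟩
    rw [sum_filter_le_smul_pi_single_eq ha] at hw
    refine ⟨ha, hb, fun k => ?_⟩
    have hk := congrFun hw k
    simp only [Pi.add_apply, Pi.zero_apply] at hk
    linear_combination hk + (g - 1 - d k) * hb k
  · rintro ⟨ha, hb, hζ⟩
    refine ⟨funext fun k => ?_, ha, hb⟩
    rw [sum_filter_le_smul_pi_single_eq ha]
    simp only [Pi.add_apply, Pi.zero_apply, hb k]
    linear_combination hζ k

/-- the kernel of the weight map `w ⊕ γ` on the free abelian group on the
tautological generators (with coefficients `a_{ij}` for `i ≤ j`, `ζ^k ∈ ℤⁿ`, `b_l`), with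
values in `Λ* ⊕ Bilˢ(Λ)` written in the standard basis, consists exactly of the elements
with `a_{ij} = 0` for `i < j`, `b_i = -2a_{ii}`, and `(2g-2)a_{ii} + |ζ^i| = 0`. -/
theorem statement_18 (r n : ℕ) (g : ℤ) (hg : 1 ≤ g) (d : Fin r → ℤ)
    (a : Fin r → Fin r → ℤ) (ζ : Fin r → Fin n → ℤ) (b : Fin r → ℤ) :
    ((∑ p ∈ Finset.univ.filter (fun p : Fin r × Fin r => p.1 ≤ p.2),
          a p.1 p.2 • (d p.1 • (Pi.single p.2 1 : Fin r → ℤ)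
            + d p.2 • (Pi.single p.1 1 : Fin r → ℤ)))
        + (∑ k, (∑ s, ζ k s) • (Pi.single k 1 : Fin r → ℤ))
        + (∑ l, (b l * (d l + 1 - g)) • (Pi.single l 1 : Fin r → ℤ)) = 0
      ∧ (∑ p ∈ Finset.univ.filter (fun p : Fin r × Fin r => p.1 ≤ p.2),
            a p.1 p.2 • (Matrix.single p.1 p.2 (1:ℤ)
              + Matrix.single p.2 p.1 (1:ℤ)))
          + (∑ l, b l • Matrix.single l l (1:ℤ)) = 0)
    ↔ ((∀ i j : Fin r, i < j → a i j = 0) ∧ (∀ i, b i = -2 * a i i)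
        ∧ ∀ i, (2 * g - 2) * a i i + (∑ s, ζ i s) = 0) :=
  statement_18_general r n g d a ζ b
end
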